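/- arXiv:1702.05784 — 7 statements merged into one kernel-verified Lean document; each statement's English description precedes it below -/
import Mathlib

section
/- Let k ≥ 2 and let P be a Sylow 2-subgroup of the alternating group A_{2^k}. Then there exists a normal subgroup W of P such that: (1) W is isomorphic to the elementary abelian 2-group Fin (2^(k-1) - 1) → ZMod 2; (2) the quotient P / W is isomorphic to a Sylow 2-subgroup of the symmetric group S_{2^(k-1)}; and (3) W has a complement in P, i.e. P is an (internal) semidirect product of a subgroup isomorphic to a Sylow 2-subgroup of S_{2^(k-1)} with W. -/
/-!
Write `m = 2^(k-1)` and view the `2^k` points as `Fin m × ZMod 2`, i.e. `m` blocks of size two.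
Let `V ≤ (ZMod 2)^m` be the even-weight vectors, acting by swapping the two points in each block
that they mark, and let the Sylow subgroup `Q ≤ S_m` permute the blocks. Then `V ⋊ Q` embeds in
`A_{2^k}`: an element of `V` is a product of an even number of transpositions, and a block
permutation moves both layers alike. Its order `2^(m-1) · 2^(m-1) = 2^(2^k-2)` is the full 2-part
of `|A_{2^k}|`, so `P ≅ V ⋊ Q`, and `V ≅ (ZMod 2)^(m-1)` (drop the parity coordinate) is the
required normal subgroup, with complement `Q`.
-/

open Equiv Equiv.Perm

section Splitting

variable {G H : Type*} [Group G] [Group H] {π : G →* H} {s : H →* G}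

theorem MonoidHom.range_inf_ker_eq_bot_of_comp_eq_id (h : π.comp s = .id H) :
    s.range ⊓ π.ker = ⊥ := by
  rw [eq_bot_iff]
  rintro _ ⟨⟨y, rfl⟩, hy⟩
  replace hy : (π.comp s) y = 1 := hy
  rw [h, MonoidHom.id_apply] at hy
  simp [hy]

theorem MonoidHom.range_sup_ker_eq_top_of_comp_eq_id (h : π.comp s = .id H) :
    s.range ⊔ π.ker = ⊤ := by
  refine eq_top_iff.mpr fun x _ => ?_
  rw [← mul_inv_cancel_left (s (π x)) x]
  refine Subgroup.mul_mem_sup ⟨π x, rfl⟩ ?_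
  rw [MonoidHom.mem_ker, map_mul, map_inv, ← MonoidHom.comp_apply, h, MonoidHom.id_apply,
    inv_mul_cancel]

end Splitting

theorem SemidirectProduct.exists_normal_complement_of_mulEquiv {G N H : Type*} [Group G]
    [Group N] [Group H] {φ : H →* MulAut N} (ε : G ≃* N ⋊[φ] H) :
    ∃ W : Subgroup G, W.Normal ∧ Nonempty (W ≃* N) ∧
      (∃ π : G →* H, Function.Surjective π ∧ π.ker = W) ∧
      ∃ C : Subgroup G, C ⊓ W = ⊥ ∧ C ⊔ W = ⊤ ∧ Nonempty (C ≃* H) := by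
  set π : G →* H := rightHom.comp ε.toMonoidHom
  set s : H →* G := ε.symm.toMonoidHom.comp inr
  set i : N →* G := ε.symm.toMonoidHom.comp inl
  have hs : π.comp s = .id H := by ext; simp [π, s]
  have hi : i.range = π.ker := by
    rw [MonoidHom.range_comp, range_inl_eq_ker_rightHom, ← MonoidHom.comap_ker,
      Subgroup.map_equiv_eq_comap_symm', MulEquiv.symm_symm]
  have hi_inj : Function.Injective i := ε.symm.injective.comp inl_injective
  have hs_inj : Function.Injective s := ε.symm.injective.comp inr_injective
  exact ⟨π.ker, π.normal_ker,
    ⟨(MulEquiv.subgroupCongr hi.symm).trans (MonoidHom.ofInjective hi_inj).symm⟩,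
    ⟨π, rightHom_surjective.comp ε.surjective, rfl⟩, s.range,
    MonoidHom.range_inf_ker_eq_bot_of_comp_eq_id hs,
    MonoidHom.range_sup_ker_eq_top_of_comp_eq_id hs, ⟨(MonoidHom.ofInjective hs_inj).symm⟩⟩

theorem Sylow.nonempty_mulEquiv_of_injective {p : ℕ} [Fact p.Prime] {G H : Type*} [Group G]
    [Finite G] [Group H] (P : Sylow p G) {f : H →* G} (hf : Function.Injective f)
    (hcard : Nat.card H = p ^ (Nat.card G).factorization p) : Nonempty (P ≃* H) := by
  have hrange : Nat.card f.range = p ^ (Nat.card G).factorization p := by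
    rw [← Nat.card_congr (MonoidHom.ofInjective hf).toEquiv, hcard]
  exact ⟨(P.equiv (Sylow.ofCard f.range hrange)).trans (MonoidHom.ofInjective hf).symm⟩

theorem Nat.factorization_factorial_two_pow (j : ℕ) :
    (2 ^ j).factorial.factorization 2 = 2 ^ j - 1 := by
  induction j with
  | zero => simp
  | succ j ih =>
    rw [pow_succ', Nat.factorization_factorial_mul Nat.prime_two, ih]
    have := j.one_le_two_pow
    omega

theorem Sylow.card_perm_fin_two_pow {j : ℕ} (Q : Sylow 2 (Perm (Fin (2 ^ j)))) :
    Nat.card Q = 2 ^ (2 ^ j - 1) := by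
  have : Fact (Nat.Prime 2) := ⟨Nat.prime_two⟩
  rw [Q.card_eq_multiplicity, Nat.card_perm, Nat.card_fin, Nat.factorization_factorial_two_pow]

theorem factorization_card_alternatingGroup_fin_two_pow {k : ℕ} (hk : 1 ≤ k) :
    (Nat.card (alternatingGroup (Fin (2 ^ k)))).factorization 2 = 2 ^ k - 2 := by
  have : Nontrivial (Fin (2 ^ k)) := Fin.nontrivial_iff_two_le.mpr (Nat.le_self_pow (by omega) 2)
  have h := congrArg (·.factorization 2) (two_mul_nat_card_alternatingGroup (α := Fin (2 ^ k)))
  simp only [Nat.card_perm, Nat.card_fin, Nat.factorization_factorial_two_pow] at h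
  rw [Nat.factorization_mul two_ne_zero Nat.card_pos.ne', Finsupp.add_apply,
    Nat.prime_two.factorization_self] at h
  omega

section EvenWeight

variable (ι : Type*) [Fintype ι]

def evenWeight : AddSubgroup (ι → ZMod 2) where
  carrier := {f | ∑ i, f i = 0}
  add_mem' := by simp_all [Finset.sum_add_distrib]
  zero_mem' := by simp
  neg_mem' := by simp_all

variable {ι}

theorem mem_evenWeight {f : ι → ZMod 2} : f ∈ evenWeight ι ↔ ∑ i, f i = 0 := Iff.rfl

def evenWeightCongr {κ : Type*} [Fintype κ] (e : ι ≃ κ) :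
    evenWeight ι ≃+ evenWeight κ where
  toFun f := ⟨f.1 ∘ e.symm, by rw [mem_evenWeight, ← f.2]; exact e.symm.sum_comp f.1⟩
  invFun f := ⟨f.1 ∘ e, by rw [mem_evenWeight, ← f.2]; exact e.sum_comp f.1⟩
  left_inv f := by ext; simp
  right_inv f := by ext; simp
  map_add' _ _ := rfl

def evenWeightAction : Perm ι →* MulAut (Multiplicative (evenWeight ι)) where
  toFun σ := (evenWeightCongr σ).toMultiplicative
  map_one' := rfl
  map_mul' _ _ := rfl

/-- The last coordinate of an even-weight vector is the parity bit of the others. -/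
def evenWeightFinSuccEquiv (n : ℕ) : (Fin n → ZMod 2) ≃+ evenWeight (Fin (n + 1)) where
  toFun f := ⟨Fin.snoc f (∑ i, f i), by
    simp [mem_evenWeight, Fin.sum_univ_castSucc, CharTwo.add_self_eq_zero]⟩
  invFun g := Fin.init g.1
  left_inv f := by simp
  right_inv g := by
    have hg := g.2
    rw [mem_evenWeight, Fin.sum_univ_castSucc, CharTwo.add_eq_zero] at hg
    ext i
    induction i using Fin.lastCases with
    | last => simpa [Fin.init] using hg
    | cast i => simp [Fin.init]
  map_add' f g := by
    ext i
    induction i using Fin.lastCases with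
    | last => simp [Finset.sum_add_distrib]
    | cast i => simp

end EvenWeight

section BlockPermutations

variable {ι : Type*}

def fiberShift (f : ι → ZMod 2) : Perm (ι × ZMod 2) :=
  prodCongrRight fun i => Equiv.addRight (f i)

@[simp] theorem fiberShift_apply (f : ι → ZMod 2) (p : ι × ZMod 2) :
    fiberShift f p = (p.1, p.2 + f p.1) := rfl

theorem fiberShift_add (f g : ι → ZMod 2) :
    fiberShift (f + g) = fiberShift f * fiberShift g := by
  ext p <;> simp only [Perm.mul_apply, fiberShift_apply, Pi.add_apply]
  ring

def blockPerm : Perm ι →* Perm (ι × ZMod 2) where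
  toFun σ := prodCongrLeft fun _ => σ
  map_one' := rfl
  map_mul' _ _ := rfl

@[simp] theorem blockPerm_apply (σ : Perm ι) (p : ι × ZMod 2) :
    blockPerm σ p = (σ p.1, p.2) := rfl

theorem blockPerm_mul_fiberShift_mul_inv (σ : Perm ι) (f : ι → ZMod 2) :
    blockPerm σ * fiberShift f * (blockPerm σ)⁻¹ = fiberShift (f ∘ σ.symm) := by
  ext p <;> simp [← map_inv]

variable [Fintype ι] (K : Subgroup (Perm ι))

abbrev EvenBlockGroup := Multiplicative (evenWeight ι) ⋊[evenWeightAction.comp K.subtype] K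

def EvenBlockGroup.toPerm : EvenBlockGroup K →* Perm (ι × ZMod 2) :=
  SemidirectProduct.lift
    { toFun := fun v => fiberShift (Multiplicative.toAdd v).1
      map_one' := by ext <;> simp
      map_mul' := fun v w => fiberShift_add _ _ }
    (blockPerm.comp K.subtype)
    fun σ => by
      refine MonoidHom.ext fun v => ?_
      exact (blockPerm_mul_fiberShift_mul_inv (σ : Perm ι) (Multiplicative.toAdd v).1).symm

theorem EvenBlockGroup.toPerm_apply (x : EvenBlockGroup K) (p : ι × ZMod 2) :
    toPerm K x p = (x.right.1 p.1, p.2 + (Multiplicative.toAdd x.left).1 (x.right.1 p.1)) := rfl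

theorem EvenBlockGroup.toPerm_injective : Function.Injective (toPerm K) := by
  rw [injective_iff_map_eq_one]
  rintro ⟨v, σ⟩ h
  have hp := fun i => DFunLike.congr_fun h (i, 0)
  simp only [toPerm_apply, Perm.one_apply, Prod.mk.injEq, zero_add] at hp
  have hσ : σ = 1 := Subtype.ext (Equiv.ext fun i => (hp i).1)
  subst hσ
  have hv : v = 1 := congrArg Multiplicative.ofAdd (Subtype.ext (funext fun i => (hp i).2))
  rw [hv]
  rfl

variable [DecidableEq ι]

theorem sign_fiberShift {f : ι → ZMod 2} (hf : f ∈ evenWeight ι) :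
    sign (fiberShift f) = 1 := by
  have sign_addRight : ∀ c : ZMod 2, sign (Equiv.addRight c) = (-1) ^ c.val := by decide
  rw [fiberShift, sign_prodCongrRight, Finset.prod_congr rfl fun i _ => sign_addRight (f i),
    Finset.prod_pow_eq_pow_sum]
  refine Even.neg_one_pow (even_iff_two_dvd.mpr ?_)
  rw [← ZMod.natCast_eq_zero_iff, Nat.cast_sum]
  rw [mem_evenWeight] at hf
  simpa [ZMod.natCast_zmod_val] using hf

theorem sign_blockPerm (σ : Perm ι) : sign (blockPerm σ) = 1 := by
  change sign (prodCongrLeft fun _ : ZMod 2 => σ) = 1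
  rw [sign_prodCongrLeft, Finset.prod_const, Finset.card_univ, ZMod.card, Int.units_sq]

theorem EvenBlockGroup.sign_toPerm (x : EvenBlockGroup K) : sign (toPerm K x) = 1 := by
  rw [← SemidirectProduct.inl_left_mul_inr_right x, map_mul, map_mul]
  simp [toPerm, sign_fiberShift (Multiplicative.toAdd x.left).2, sign_blockPerm]

def EvenBlockGroup.toAlternating : EvenBlockGroup K →* alternatingGroup (ι × ZMod 2) :=
  (toPerm K).codRestrict _ (sign_toPerm K)

theorem EvenBlockGroup.toAlternating_injective : Function.Injective (toAlternating K) :=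
  fun _ _ h => toPerm_injective K (congrArg Subtype.val h)

end BlockPermutations

/-- Structure of a Sylow 2-subgroup `P` of `A_{2^k}` (`k ≥ 2`): there is a normal
subgroup `W ≤ P` isomorphic to the elementary abelian group
`Fin (2^(k-1) - 1) → ZMod 2`, with `P / W` isomorphic to a Sylow 2-subgroup `Q` of
`S_{2^(k-1)}` (expressed via a surjective homomorphism `P →* Q` with kernel `W`),
and `W` has a complement `H` in `P` with `H` isomorphic to `Q`. -/
theorem stmt_3 (k : ℕ) (hk : 2 ≤ k)
    (P : Sylow 2 (alternatingGroup (Fin (2 ^ k))))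
    (Q : Sylow 2 (Equiv.Perm (Fin (2 ^ (k - 1))))) :
    ∃ W : Subgroup ↥P, W.Normal ∧
      Nonempty (W ≃* Multiplicative (Fin (2 ^ (k - 1) - 1) → ZMod 2)) ∧
      (∃ φ : ↥P →* ↥Q, Function.Surjective φ ∧ φ.ker = W) ∧
      (∃ H : Subgroup ↥P, H ⊓ W = ⊥ ∧ H ⊔ W = ⊤ ∧ Nonempty (H ≃* ↥Q)) := by
  have : Fact (Nat.Prime 2) := ⟨Nat.prime_two⟩
  have hm : 2 ^ (k - 1) - 1 + 1 = 2 ^ (k - 1) := Nat.sub_add_cancel Nat.one_le_two_pow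
  have hdouble : 2 ^ (k - 1) * 2 = 2 ^ k := by rw [← pow_succ, Nat.sub_add_cancel (by omega)]
  have hpoints : Fintype.card (Fin (2 ^ (k - 1)) × ZMod 2) = 2 ^ k := by
    rw [Fintype.card_prod, Fintype.card_fin, ZMod.card, hdouble]
  let e := Fintype.equivFinOfCardEq hpoints
  let f := e.altCongrHom.toMonoidHom.comp (EvenBlockGroup.toAlternating (Q : Subgroup _))
  have hf : Function.Injective f :=
    e.altCongrHom.injective.comp (EvenBlockGroup.toAlternating_injective _)
  let eW : (Fin (2 ^ (k - 1) - 1) → ZMod 2) ≃+ evenWeight (Fin (2 ^ (k - 1))) :=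
    (evenWeightFinSuccEquiv _).trans (evenWeightCongr (finCongr hm))
  have hcard : Nat.card (EvenBlockGroup (Q : Subgroup (Perm (Fin (2 ^ (k - 1)))))) =
      2 ^ (Nat.card (alternatingGroup (Fin (2 ^ k)))).factorization 2 := by
    rw [SemidirectProduct.card, Nat.card_congr (Multiplicative.toAdd.trans eW.symm.toEquiv),
      Q.card_perm_fin_two_pow, factorization_card_alternatingGroup_fin_two_pow (by omega)]
    simp only [Nat.card_fun, Nat.card_fin, Nat.card_zmod, ← pow_add]
    congr 1
    omega
  obtain ⟨ε⟩ := P.nonempty_mulEquiv_of_injective hf hcard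
  obtain ⟨W, hW, ⟨ιW⟩, hπ, hC⟩ :=
    SemidirectProduct.exists_normal_complement_of_mulEquiv ε
  exact ⟨W, hW, ⟨ιW.trans eW.symm.toMultiplicative⟩, hπ, hC⟩
end

section
/- Let p be a prime, B a group, and let W be the wreath product of B by the cyclic group ZMod p, realized as the semidirect product (Fin p → B) ⋊ ZMod p where a generator of ZMod p acts by cyclically shifting the coordinates. Then for every tuple r : Fin p → B, the element (r, 0) of W lies in the commutator subgroup of W if and only if the product r 0 * r 1 * ⋯ * r (p-1) lies in the commutator subgroup of B. -/
open Fin.NatCast in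
/-- Casting `ZMod p`-values to `Fin p` (via `ZMod.val`) is additive. -/
theorem castValAdd (p : ℕ) [NeZero p] (x y : ZMod p) :
    (((x + y).val : Fin p)) = ((x.val : Fin p) + (y.val : Fin p)) := by
  ext
  rw [Fin.val_add, Fin.val_natCast, Fin.val_natCast, Fin.val_natCast, ZMod.val_add,
    Nat.mod_mod_of_dvd _ dvd_rfl, ← Nat.add_mod]

/-- The multiplicative automorphism of the direct power `α → B` given by
precomposition with a permutation of the index set. -/
def permMulAut {α : Type*} {B : Type*} [Group B] (e : Equiv.Perm α) :
    MulAut (α → B) where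
  toFun f := f ∘ e
  invFun f := f ∘ e.symm
  left_inv f := by ext x; simp
  right_inv f := by ext x; simp
  map_mul' f g := rfl

open Fin.NatCast in
/-- The action of the cyclic group `ZMod p` (written multiplicatively) on the
direct power `Fin p → B` by cyclically shifting the coordinates:
`c` sends `f` to `fun i => f (i + c)`. -/
def cyclicShift (p : ℕ) [NeZero p] (B : Type*) [Group B] :
    Multiplicative (ZMod p) →* MulAut (Fin p → B) where
  toFun c := permMulAut (B := B) (Equiv.addRight (((Multiplicative.toAdd c).val : Fin p)))
  map_one' := by
    ext f i
    simp [permMulAut]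
  map_mul' c d := by
    ext f i
    simp only [permMulAut, MulAut.mul_apply, MulEquiv.coe_mk, Equiv.coe_fn_mk,
      Function.comp_apply, Equiv.coe_addRight, toAdd_mul]
    rw [castValAdd, ← add_assoc]

/-!
The product of the coordinates, taken in the abelianization of `B`, is invariant under cyclic
shifts, so it extends (trivially on `ZMod p`) to a homomorphism `W → Bᵃᵇ` sending `(r, 0)` to the
class of `r 0 * ⋯ * r (p-1)`. Conversely, in `Wᵃᵇ` the element `(Pi.mulSingle i b, 0)` is conjugate
by a shift to `(Pi.mulSingle 0 b, 0)`, so the class of `(r, 0)` is the image of that same product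
under `b ↦ (Pi.mulSingle 0 b, 0)`, a homomorphism `Bᵃᵇ → Wᵃᵇ`.
-/

namespace Abelianization

variable {ι B : Type*} [Fintype ι] [DecidableEq ι] [Group B]

def piProd : (ι → B) →* Abelianization B where
  toFun f := ∏ i, of (f i)
  map_one' := by simp
  map_mul' f g := by simp [Finset.prod_mul_distrib]

omit [DecidableEq ι] in
lemma piProd_comp_perm (e : Equiv.Perm ι) (f : ι → B) : piProd (f ∘ e) = piProd f :=
  Equiv.prod_comp e fun i => of (f i)

lemma piProd_mulSingle (i : ι) (b : B) : piProd (Pi.mulSingle i b) = of b := by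
  change ∏ j, _ = _
  rw [Fintype.prod_eq_single i fun j hj => by rw [Pi.mulSingle_eq_of_ne hj, map_one],
    Pi.mulSingle_eq_same]

lemma piProd_apply_fin {n : ℕ} (f : Fin n → B) : piProd f = of (List.ofFn f).prod := by
  rw [map_list_prod, List.map_ofFn, List.prod_ofFn]
  rfl

end Abelianization

abbrev CyclicWreath (p : ℕ) [NeZero p] (B : Type*) [Group B] :=
  SemidirectProduct (Fin p → B) (Multiplicative (ZMod p)) (cyclicShift p B)

namespace CyclicWreath

open SemidirectProduct Fin.NatCast Abelianization

variable (p : ℕ) [NeZero p] {B : Type*} [Group B]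

lemma piProd_cyclicShift (c : Multiplicative (ZMod p)) (f : Fin p → B) :
    piProd (cyclicShift p B c f) = piProd f :=
  piProd_comp_perm _ f

variable (B) in
def toAbelianization : Abelianization (CyclicWreath p B) →* Abelianization B :=
  Abelianization.lift <| SemidirectProduct.lift piProd 1 fun c => by
    ext f
    simpa using piProd_cyclicShift p c f

variable (B) in
def ofAbelianization : Abelianization B →* Abelianization (CyclicWreath p B) :=
  Abelianization.lift <| of.comp <| inl.comp <| MonoidHom.mulSingle (fun _ : Fin p => B) 0

lemma toAbelianization_of_inl (f : Fin p → B) :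
    toAbelianization p B (of (inl f)) = piProd f := by
  simp [toAbelianization]

lemma of_inl_cyclicShift (c : Multiplicative (ZMod p)) (f : Fin p → B) :
    (of (inl (cyclicShift p B c f) : CyclicWreath p B)) = of (inl f) := by
  rw [inl_aut, map_mul, map_mul, map_inv, map_inv, mul_inv_cancel_comm]

lemma of_inl_mulSingle (i : Fin p) (b : B) :
    (of (inl (Pi.mulSingle i b)) : Abelianization (CyclicWreath p B)) =
      of (inl (Pi.mulSingle 0 b)) := by
  have hshift : cyclicShift p B (Multiplicative.ofAdd (i.val : ZMod p)) (Pi.mulSingle i b) =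
      Pi.mulSingle 0 b := by
    change Pi.mulSingle i b ∘ Equiv.addRight _ = _
    rw [Pi.mulSingle_comp_equiv, toAdd_ofAdd, ZMod.val_natCast_of_lt i.isLt, Fin.cast_val_eq_self,
      Equiv.addRight_symm_apply]
    exact congrArg (Pi.mulSingle · b) (add_neg_cancel i)
  rw [← hshift, of_inl_cyclicShift]

lemma ofAbelianization_comp_piProd :
    (ofAbelianization p B).comp piProd = of.comp inl :=
  MonoidHom.pi_ext fun i b => by
    simp [ofAbelianization, piProd_mulSingle, of_inl_mulSingle p i b]

end CyclicWreath

open Abelianization CyclicWreath in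
/-- Meldrum's criterion: in the wreath product `W = (Fin p → B) ⋊ ZMod p`
(the wreath product of `B` by the cyclic group of order `p`, `p` prime, acting by
cyclic shift of coordinates), an element `(r, 0)` of the base group lies in the
commutator subgroup of `W` iff the product `r 0 * r 1 * ⋯ * r (p-1)` lies in the
commutator subgroup of `B`. -/
theorem stmt_5 (p : ℕ) [Fact p.Prime] (B : Type*) [Group B] (r : Fin p → B) :
    (⟨r, 1⟩ : SemidirectProduct (Fin p → B) (Multiplicative (ZMod p)) (cyclicShift p B)) ∈
        commutator (SemidirectProduct (Fin p → B) (Multiplicative (ZMod p)) (cyclicShift p B)) ↔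
      (List.ofFn r).prod ∈ commutator B := by
  rw [← Abelianization.ker_of, ← Abelianization.ker_of, MonoidHom.mem_ker, MonoidHom.mem_ker]
  change of (SemidirectProduct.inl r : CyclicWreath p B) = 1 ↔ _
  constructor
  · intro h
    rw [← piProd_apply_fin, ← toAbelianization_of_inl, h, map_one]
  · intro h
    rw [← MonoidHom.comp_apply of, ← ofAbelianization_comp_piProd,
      MonoidHom.comp_apply, piProd_apply_fin, h, map_one]
end

section
/- Let k ≥ 1 and let P be a Sylow 2-subgroup of the symmetric group S_{2^k}. Then for every element g of P, the square g^2 lies in the commutator subgroup of P. -/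
/-!
By `Sylow.mulEquivIteratedWreathProduct`, `P` is the iterated regular wreath product of `C₂`.
A regular wreath product `D ≀ᵣ Q` of groups generated by elements of order dividing two is again
generated by such elements (the base group `Q → D` coordinatewise, the top group `Q` directly),
so `P` is generated by involutions. Their images in the abelianization square to `1`, hence so
does the image of every element, i.e. every square lies in the commutator subgroup.
-/

open Subgroup

variable {G H : Type*} [Group G] [Group H]

theorem MonoidHom.range_le_closure_sq_eq_one (f : G →* H)
    (hG : closure {x : G | x ^ 2 = 1} = ⊤) : f.range ≤ closure {x : H | x ^ 2 = 1} := by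
  rw [MonoidHom.range_eq_map, ← hG, MonoidHom.map_closure]
  refine closure_mono ?_
  rintro _ ⟨x, hx, rfl⟩
  rw [Set.mem_ofPred, ← map_pow, show x ^ 2 = 1 from hx, map_one]

theorem Subgroup.closure_sq_eq_one_eq_top_of_surjective (f : G →* H)
    (hf : Function.Surjective f) (hG : closure {x : G | x ^ 2 = 1} = ⊤) :
    closure {x : H | x ^ 2 = 1} = ⊤ :=
  top_le_iff.1 <| (f.range_eq_top.2 hf).ge.trans (f.range_le_closure_sq_eq_one hG)

theorem sq_mem_commutator_of_closure_sq_eq_one (hG : closure {x : G | x ^ 2 = 1} = ⊤) (g : G) :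
    g ^ 2 ∈ commutator G := by
  have hker : closure {x : G | x ^ 2 = 1} ≤ ((powMonoidHom 2).comp Abelianization.of).ker := by
    rw [closure_le]
    intro x (hx : x ^ 2 = 1)
    rw [SetLike.mem_coe, MonoidHom.mem_ker, MonoidHom.comp_apply, powMonoidHom_apply, ← map_pow,
      hx, map_one]
  have hg := hker (hG ▸ mem_top g)
  rwa [MonoidHom.mem_ker, MonoidHom.comp_apply, powMonoidHom_apply, ← map_pow,
    ← MonoidHom.mem_ker, Abelianization.ker_of] at hg

theorem Pi.closure_sq_eq_one_eq_top {ι : Type*} [Finite ι]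
    (hG : closure {x : G | x ^ 2 = 1} = ⊤) : closure {x : ι → G | x ^ 2 = 1} = ⊤ := by
  have hpi : closure (Set.univ.pi fun _ : ι => {x : G | x ^ 2 = 1}) = ⊤ := by
    rw [closure_pi (s := fun _ => {x : G | x ^ 2 = 1}) fun _ => one_pow 2, hG, pi_top]
  refine top_le_iff.1 (hpi ▸ closure_mono fun x hx => ?_)
  show x ^ 2 = 1
  ext i
  exact hx i trivial

namespace RegularWreathProduct

variable {D Q : Type*} [Group D] [Group Q]

def ofLeft : (Q → D) →* D ≀ᵣ Q where
  toFun f := ⟨f, 1⟩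
  map_one' := rfl
  map_mul' f g := by ext <;> simp

theorem ofLeft_mul_inl (x : D ≀ᵣ Q) : ofLeft x.left * inl x.right = x := by
  ext <;> simp [ofLeft]

theorem closure_sq_eq_one_eq_top [Finite Q] (hD : closure {x : D | x ^ 2 = 1} = ⊤)
    (hQ : closure {x : Q | x ^ 2 = 1} = ⊤) : closure {x : D ≀ᵣ Q | x ^ 2 = 1} = ⊤ := by
  refine eq_top_iff.2 fun x _ => ?_
  rw [← ofLeft_mul_inl x]
  exact mul_mem (ofLeft.range_le_closure_sq_eq_one (Pi.closure_sq_eq_one_eq_top hD) ⟨_, rfl⟩)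
    (inl.range_le_closure_sq_eq_one hQ ⟨_, rfl⟩)

end RegularWreathProduct

theorem IteratedWreathProduct.closure_sq_eq_one_eq_top [Finite G]
    (hG : closure {x : G | x ^ 2 = 1} = ⊤) (n : ℕ) :
    closure {x : IteratedWreathProduct G n | x ^ 2 = 1} = ⊤ := by
  induction n with
  | zero =>
    have : Subsingleton (IteratedWreathProduct G 0) := inferInstanceAs (Subsingleton PUnit)
    exact Subsingleton.elim _ _
  | succ n ih => exact RegularWreathProduct.closure_sq_eq_one_eq_top ih hG

theorem stmt_6_general (k : ℕ)
    (P : Sylow 2 (Equiv.Perm (Fin (2 ^ k)))) (g : ↥P) :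
    g ^ 2 ∈ commutator ↥P := by
  have hsq : ∀ x : Multiplicative (ZMod 2), x ^ 2 = 1 := by decide
  have hC₂ : Subgroup.closure {x : Multiplicative (ZMod 2) | x ^ 2 = 1} = ⊤ :=
    eq_top_iff.2 fun x _ => Subgroup.subset_closure (hsq x)
  let e := Sylow.mulEquivIteratedWreathProduct 2 k (Fin (2 ^ k)) (Nat.card_fin _)
    (Multiplicative (ZMod 2)) (by simp) P
  have hP : closure {x : P | x ^ 2 = 1} = ⊤ :=
    closure_sq_eq_one_eq_top_of_surjective e.symm.toMonoidHom e.symm.surjective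
      (IteratedWreathProduct.closure_sq_eq_one_eq_top hC₂ k)
  exact sq_mem_commutator_of_closure_sq_eq_one hP g

/-- For `k ≥ 1` and `P` a Sylow 2-subgroup of the symmetric group `S_{2^k}`,
the square of every element of `P` lies in the commutator subgroup of `P`. -/
theorem stmt_6 (k : ℕ) (hk : 1 ≤ k)
    (P : Sylow 2 (Equiv.Perm (Fin (2 ^ k)))) (g : ↥P) :
    g ^ 2 ∈ commutator ↥P :=
  stmt_6_general k P g
end

section
/- For every k ≥ 1, the following four groups are pairwise isomorphic: a Sylow 2-subgroup of A_{4k+3}, a Sylow 2-subgroup of A_{4k+2}, a Sylow 2-subgroup of S_{4k+1}, and a Sylow 2-subgroup of S_{4k}. -/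
open Equiv Equiv.Perm
open scoped Nat

/-- `permCongr` as a `MulEquiv`. -/
def permCongrMul {α β : Type*} (e : α ≃ β) : Perm α ≃* Perm β :=
  { e.permCongr with
    map_mul' := fun σ τ => by
      ext x
      simp [Equiv.permCongr_apply] }

/-- the hom `ℤˣ →* Perm (Fin 2)` sending `-1` to the swap. -/
def unitsToPerm2 : ℤˣ →* Perm (Fin 2) where
  toFun u := if u = 1 then 1 else Equiv.swap 0 1
  map_one' := by simp
  map_mul' u v := by
    rcases Int.units_eq_one_or u with hu | hu <;>
      rcases Int.units_eq_one_or v with hv | hv <;>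
        simp [hu, hv, Equiv.swap_mul_self]

lemma sign_unitsToPerm2 (u : ℤˣ) : Perm.sign (unitsToPerm2 u) = u := by
  rcases Int.units_eq_one_or u with hu | hu <;> simp [hu, unitsToPerm2]

/-- Sylow 2-subgroups transport along injections with equal 2-valuation. -/
lemma sylow_iso {H G : Type*} [Group H] [Group G] [Fintype H] [Fintype G]
    (f : H →* G) (hf : Function.Injective f)
    (hcard : (Nat.card H).factorization 2 = (Nat.card G).factorization 2)
    (P : Sylow 2 H) (Q : Sylow 2 G) : Nonempty (↥P ≃* ↥Q) := by
  haveI : Fact (Nat.Prime 2) := ⟨Nat.prime_two⟩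
  have h1 : Nat.card (P.toSubgroup.map f) = 2 ^ (Nat.card G).factorization 2 := by
    rw [Nat.card_congr (P.toSubgroup.equivMapOfInjective f hf).toEquiv.symm,
      P.card_eq_multiplicity, hcard]
  let Q' : Sylow 2 G := Sylow.ofCard _ h1
  have e1 : ↥P ≃* ↥Q' := P.toSubgroup.equivMapOfInjective f hf
  exact ⟨e1.trans (Sylow.equiv Q' Q)⟩

/-- Embedding `S_n ↪ A_{n+2}`. -/
noncomputable def snToAn2 (n : ℕ) : Perm (Fin n) →* alternatingGroup (Fin (n + 2)) :=
  MonoidHom.codRestrict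
    ((permCongrMul (finSumFinEquiv : Fin n ⊕ Fin 2 ≃ Fin (n + 2))).toMonoidHom.comp
      ((Equiv.Perm.sumCongrHom (Fin n) (Fin 2)).comp
        ((MonoidHom.id (Perm (Fin n))).prod (unitsToPerm2.comp Perm.sign))))
    (alternatingGroup (Fin (n + 2)))
    (by
      intro σ
      rw [Equiv.Perm.mem_alternatingGroup]
      simp only [MonoidHom.comp_apply, MulEquiv.coe_toMonoidHom, MonoidHom.prod_apply,
        MonoidHom.id_apply, Equiv.Perm.sumCongrHom_apply]
      show Perm.sign (Equiv.permCongr finSumFinEquiv _) = 1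
      rw [Equiv.Perm.sign_permCongr, Equiv.Perm.sign_sumCongr, sign_unitsToPerm2]
      rcases Int.units_eq_one_or (Perm.sign σ) with h | h <;> rw [h] <;> decide)

lemma snToAn2_injective (n : ℕ) : Function.Injective (snToAn2 n) := by
  intro σ τ h
  have h2 := congrArg (fun x => ((x : alternatingGroup (Fin (n+2))) : Perm (Fin (n+2)))) h
  simp only [snToAn2, MonoidHom.codRestrict_apply, MonoidHom.comp_apply,
    MulEquiv.coe_toMonoidHom] at h2
  have h3 := (permCongrMul (finSumFinEquiv : Fin n ⊕ Fin 2 ≃ Fin (n + 2))).injective h2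
  have h4 := Equiv.Perm.sumCongrHom_injective h3
  exact congrArg Prod.fst h4

/-- Embedding `A_n ↪ A_{n+1}`. -/
noncomputable def anToAn1 (n : ℕ) :
    alternatingGroup (Fin n) →* alternatingGroup (Fin (n + 1)) :=
  MonoidHom.codRestrict
    ((Equiv.Perm.viaEmbeddingHom (Fin.castLEEmb (Nat.le_succ n))).comp
      (alternatingGroup (Fin n)).subtype)
    (alternatingGroup (Fin (n + 1)))
    (by
      rintro ⟨σ, hσ⟩
      rw [Equiv.Perm.mem_alternatingGroup]
      show Perm.sign (Equiv.Perm.viaEmbedding σ _) = 1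
      rw [Equiv.Perm.viaEmbedding, Equiv.Perm.sign_extendDomain]
      exact hσ)

lemma anToAn1_injective (n : ℕ) : Function.Injective (anToAn1 n) := by
  intro σ τ h
  have h2 := congrArg (fun x => ((x : alternatingGroup (Fin (n+1))) : Perm (Fin (n+1)))) h
  simp only [anToAn1, MonoidHom.codRestrict_apply, MonoidHom.comp_apply,
    Subgroup.coe_subtype] at h2
  exact Subtype.ext (Equiv.Perm.viaEmbeddingHom_injective _ h2)

lemma card_perm_fin (n : ℕ) : Nat.card (Perm (Fin n)) = n ! := by
  rw [Nat.card_eq_fintype_card, Fintype.card_perm, Fintype.card_fin]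

lemma card_alt_fin (n : ℕ) [Nontrivial (Fin n)] :
    2 * Nat.card (alternatingGroup (Fin n)) = n ! := by
  rw [Nat.card_eq_fintype_card, two_mul_card_alternatingGroup, Fintype.card_perm,
    Fintype.card_fin]

lemma fact_odd_mul {m r : ℕ} (hr : ¬ 2 ∣ r) (hr0 : 0 < r) :
    (r * m !).factorization 2 = (m !).factorization 2 := by
  rw [Nat.factorization_mul hr0.ne' (Nat.factorial_pos m).ne']
  simp [Nat.factorization_eq_zero_of_not_dvd hr]

/-- For every `k ≥ 1`, the following groups are pairwise isomorphic: a Sylow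
2-subgroup of `A_{4k+3}`, a Sylow 2-subgroup of `A_{4k+2}`, a Sylow 2-subgroup
of `S_{4k+1}`, and a Sylow 2-subgroup of `S_{4k}`. -/
theorem stmt_12 (k : ℕ) (hk : 1 ≤ k)
    (P₁ : Sylow 2 (alternatingGroup (Fin (4 * k + 3))))
    (P₂ : Sylow 2 (alternatingGroup (Fin (4 * k + 2))))
    (P₃ : Sylow 2 (Equiv.Perm (Fin (4 * k + 1))))
    (P₄ : Sylow 2 (Equiv.Perm (Fin (4 * k)))) :
    Nonempty (↥P₁ ≃* ↥P₂) ∧ Nonempty (↥P₂ ≃* ↥P₃) ∧ Nonempty (↥P₃ ≃* ↥P₄) := by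
  haveI : Fact (Nat.Prime 2) := ⟨Nat.prime_two⟩
  haveI : Nontrivial (Fin (4 * k + 2)) := by
    apply Fin.nontrivial_iff_two_le.2; omega
  haveI : Nontrivial (Fin (4 * k + 3)) := by
    apply Fin.nontrivial_iff_two_le.2; omega
  -- basic cardinality facts
  have hS1 : Nat.card (Perm (Fin (4 * k + 1))) = (4 * k + 1) ! := card_perm_fin _
  have hS0 : Nat.card (Perm (Fin (4 * k))) = (4 * k) ! := card_perm_fin _
  have hA2 : Nat.card (alternatingGroup (Fin (4 * k + 2))) = (2 * k + 1) * (4 * k + 1) ! := by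
    have h := card_alt_fin (4 * k + 2)
    apply Nat.eq_of_mul_eq_mul_left (show 0 < 2 by norm_num)
    rw [h]
    have : (4 * k + 2) ! = (4 * k + 2) * (4 * k + 1) ! := Nat.factorial_succ _
    rw [this]; ring
  have hA3 : Nat.card (alternatingGroup (Fin (4 * k + 3))) =
      (4 * k + 3) * ((2 * k + 1) * (4 * k + 1) !) := by
    have h := card_alt_fin (4 * k + 3)
    apply Nat.eq_of_mul_eq_mul_left (show 0 < 2 by norm_num)
    rw [h]
    have h1 : (4 * k + 3) ! = (4 * k + 3) * (4 * k + 2) ! := Nat.factorial_succ _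
    have h2 : (4 * k + 2) ! = (4 * k + 2) * (4 * k + 1) ! := Nat.factorial_succ _
    rw [h1, h2]; ring
  have hf1 : (4 * k + 1) ! = (4 * k + 1) * (4 * k) ! := Nat.factorial_succ _
  -- factorization facts
  have v1 : ((4 * k + 1) !).factorization 2 = ((4 * k) !).factorization 2 := by
    rw [hf1]
    exact fact_odd_mul (by omega) (by omega)
  have vA2 : (Nat.card (alternatingGroup (Fin (4 * k + 2)))).factorization 2
      = ((4 * k + 1) !).factorization 2 := by
    rw [hA2]
    exact fact_odd_mul (by omega) (by omega)
  have vA3 : (Nat.card (alternatingGroup (Fin (4 * k + 3)))).factorization 2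
      = ((4 * k + 1) !).factorization 2 := by
    rw [hA3, ← Nat.mul_assoc]
    refine fact_odd_mul ?_ (by positivity)
    intro h
    rcases (Nat.Prime.dvd_mul Nat.prime_two).1 h with h' | h' <;> omega
  -- the isomorphisms
  have e12 : Nonempty (↥P₂ ≃* ↥P₁) := by
    apply sylow_iso (anToAn1 (4 * k + 2)) (anToAn1_injective _)
    rw [vA2, vA3]
  have e24 : Nonempty (↥P₄ ≃* ↥P₂) := by
    apply sylow_iso (snToAn2 (4 * k)) (snToAn2_injective _)
    rw [hS0, vA2, v1]
  have e34 : Nonempty (↥P₄ ≃* ↥P₃) := by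
    apply sylow_iso (Equiv.Perm.viaEmbeddingHom (Fin.castLEEmb (Nat.le_succ (4 * k))))
      (Equiv.Perm.viaEmbeddingHom_injective _)
    rw [hS0, hS1, v1]
  obtain ⟨a⟩ := e12; obtain ⟨b⟩ := e24; obtain ⟨c⟩ := e34
  exact ⟨⟨a.symm⟩, ⟨b.symm.trans c⟩, ⟨c.symm⟩⟩
end

section
/- For every k ≥ 1, the order of a Sylow 2-subgroup of A_{4k} equals 2^(2 + i) times the order of a Sylow 2-subgroup of A_{4k-2}, where i = v₂(k) is the exponent of the largest power of 2 dividing k (i.e. i = (Nat.factorization k) 2). -/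
lemma card_alt (n : ℕ) (hn : 2 ≤ n) :
    2 * Nat.card (alternatingGroup (Fin n)) = Nat.factorial n := by
  haveI : Nontrivial (Fin n) := Fin.nontrivial_iff_two_le.mpr hn
  have := two_mul_card_alternatingGroup (α := Fin n)
  simpa [Nat.card_eq_fintype_card, Fintype.card_perm] using this

/-- For every `k ≥ 1`, the order of a Sylow 2-subgroup of `A_{4k}` equals
`2^(2 + v₂(k))` times the order of a Sylow 2-subgroup of `A_{4k-2}`, where
`v₂(k)` is the 2-adic valuation of `k`. -/
theorem stmt_13 (k : ℕ) (hk : 1 ≤ k)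
    (P : Sylow 2 (alternatingGroup (Fin (4 * k))))
    (Q : Sylow 2 (alternatingGroup (Fin (4 * k - 2)))) :
    Nat.card P = 2 ^ (2 + (Nat.factorization k) 2) * Nat.card Q := by
  haveI : Fact (Nat.Prime 2) := ⟨Nat.prime_two⟩
  set a := Nat.card (alternatingGroup (Fin (4 * k)))
  set b := Nat.card (alternatingGroup (Fin (4 * k - 2)))
  have ha0 : a ≠ 0 := Nat.card_pos.ne'
  have hb0 : b ≠ 0 := Nat.card_pos.ne'
  have ha : 2 * a = Nat.factorial (4 * k) := card_alt _ (by omega)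
  have hb : 2 * b = Nat.factorial (4 * k - 2) := card_alt _ (by omega)
  have h20 : (2:ℕ) ≠ 0 := two_ne_zero
  have h4k : 4 * k ≠ 0 := by omega
  have h4k1 : 4 * k - 1 ≠ 0 := by omega
  have h2b : 2 * b ≠ 0 := by positivity
  have hrest : (4 * k - 1) * (2 * b) ≠ 0 := Nat.mul_ne_zero h4k1 h2b
  have h40 : (4:ℕ) ≠ 0 := by norm_num
  have hk0 : k ≠ 0 := by omega
  have key : a.factorization 2 = 2 + k.factorization 2 + b.factorization 2 := by
    have hfact : 2 * a = (4 * k) * ((4 * k - 1) * (2 * b)) := by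
      rw [ha, hb]
      have h1 : 4 * k = (4 * k - 1) + 1 := by omega
      have h2 : 4 * k - 1 = (4 * k - 2) + 1 := by omega
      conv_lhs => rw [h1, Nat.factorial_succ, ← h1, h2, Nat.factorial_succ, ← h2]
    have hfour : 4 * k = 4 * k := rfl
    have this2 : (2 * a).factorization 2 = ((4 * k) * ((4 * k - 1) * (2 * b))).factorization 2 := by
      rw [hfact]
    rw [Nat.factorization_mul h20 ha0, Nat.factorization_mul h4k hrest,
      Nat.factorization_mul h4k1 h2b, Nat.factorization_mul h20 hb0,
      Nat.factorization_mul h40 hk0] at this2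
    simp only [Finsupp.add_apply] at this2
    have hodd : (4 * k - 1).factorization 2 = 0 := by
      rw [Nat.factorization_eq_zero_iff]
      right; left
      rw [Nat.two_dvd_ne_zero]; omega
    have h4 : (Nat.factorization 4) 2 = 2 := by
      rw [show (4:ℕ) = 2^2 from rfl, Nat.prime_two.factorization_pow]
      simp
    omega
  rw [Sylow.card_eq_multiplicity P, Sylow.card_eq_multiplicity Q, key, pow_add, pow_add]
end

section
/- Let n be even, n ≥ 2, and let m = v₂(n) be the exponent of the largest power of 2 dividing n. Then: (1) the order of a Sylow 2-subgroup of A_n equals 2^(m-1) times the order of a Sylow 2-subgroup of S_{n-1}; and (2) a Sylow 2-subgroup of S_{n-1} is isomorphic to a subgroup of a Sylow 2-subgroup of A_n (there is an injective group homomorphism from a Sylow 2-subgroup of S_{n-1} into a Sylow 2-subgroup of A_n). -/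
/-!
Since `|A_n| = n!/2` and `n! = n · (n-1)!`, the orders follow from `v₂(n!) = v₂(n) + v₂((n-1)!)`.
For the embedding, `n - 1` is odd, so a Sylow 2-subgroup `Q` of `S_{n-1}` fixes some point `x`.
Viewing `Q` inside `S_n`, it also fixes the new point `b`, hence commutes with the transposition
`(x b)`; multiplying the odd elements of `Q` by `(x b)` gives an injective homomorphism
`Q → A_n`. By Sylow's theorems, any 2-subgroup of `A_n` embeds into every Sylow 2-subgroup.
-/

open Equiv Equiv.Perm Nat

section UnitsInt

variable {G : Type*} [Group G] (g : G) (hg : g * g = 1)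

def unitsIntHomOfMulSelf : ℤˣ →* G where
  toFun u := if u = 1 then 1 else g
  map_one' := if_pos rfl
  map_mul' u v := by
    rcases Int.units_eq_one_or u with rfl | rfl <;> rcases Int.units_eq_one_or v with rfl | rfl <;>
      simp [hg]

theorem unitsIntHomOfMulSelf_eq_one_or (u : ℤˣ) :
    unitsIntHomOfMulSelf g hg u = 1 ∨ unitsIntHomOfMulSelf g hg u = g := by
  rcases Int.units_eq_one_or u with rfl | rfl <;> simp [unitsIntHomOfMulSelf]

end UnitsInt

section Swap

variable {α : Type*} [DecidableEq α] {a b : α}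

theorem commute_swap_of_apply_eq {σ : Perm α} (ha : σ a = a) (hb : σ b = b) :
    Commute σ (swap a b) := by
  rw [Commute, SemiconjBy, ← mul_inv_eq_iff_eq_mul, ← swap_apply_apply, ha, hb]

variable [Fintype α]

theorem sign_unitsIntHomOfMulSelf_swap (hab : a ≠ b) (u : ℤˣ) :
    sign (unitsIntHomOfMulSelf (swap a b) (swap_mul_self a b) u) = u := by
  rcases Int.units_eq_one_or u with rfl | rfl <;> simp [unitsIntHomOfMulSelf, sign_swap hab]

theorem exists_injective_alternatingGroup_of_apply_eq (hab : a ≠ b) {H : Type*} [Group H]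
    (ρ : H →* Perm α) (hρ : Function.Injective ρ) (ha : ∀ h, ρ h a = a) (hb : ∀ h, ρ h b = b) :
    ∃ f : H →* alternatingGroup α, Function.Injective f := by
  set τ := unitsIntHomOfMulSelf (swap a b) (swap_mul_self a b)
  have hτ := unitsIntHomOfMulSelf_eq_one_or (swap a b) (swap_mul_self a b)
  let ψ : H →* Perm α := τ.comp (sign.comp ρ)
  have hcomm : ∀ h k, Commute (ρ h) (ψ k) := fun h k => by
    obtain hk | hk : ψ k = 1 ∨ ψ k = swap a b := hτ _
    · exact hk ▸ Commute.one_right _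
    · exact hk ▸ commute_swap_of_apply_eq (ha h) (hb h)
  let f : H →* Perm α := (ρ.noncommCoprod ψ hcomm).comp ((MonoidHom.id H).prod (MonoidHom.id H))
  have hf : ∀ h, f h = ρ h * ψ h := fun _ => rfl
  have hf_mem : ∀ h, f h ∈ alternatingGroup α := fun h => by
    rw [mem_alternatingGroup, hf, map_mul, MonoidHom.comp_apply, MonoidHom.comp_apply,
      sign_unitsIntHomOfMulSelf_swap hab, Int.units_mul_self]
  refine ⟨f.codRestrict _ hf_mem, (injective_iff_map_eq_one _).2 fun h h1 => ?_⟩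
  replace h1 : ρ h * ψ h = 1 := congrArg Subtype.val h1
  obtain hψ | hψ : ψ h = 1 ∨ ψ h = swap a b := hτ _
  · exact hρ (by rwa [hψ, mul_one, ← map_one ρ] at h1)
  · have h1a := congrArg (· a) (eq_inv_of_mul_eq_one_left h1)
    simp only [ha, hψ, swap_inv, swap_apply_left] at h1a
    exact absurd h1a hab

end Swap

theorem IsPGroup.exists_injective_alternatingGroup {β α : Type*} [Fintype α] [DecidableEq α]
    {H : Subgroup (Perm β)} (hH : IsPGroup 2 H) (hβ : Odd (Nat.card β)) (ι : β ↪ α) {b : α}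
    (hb : b ∉ Set.range ι) : ∃ f : H →* alternatingGroup α, Function.Injective f := by
  obtain ⟨x, hx⟩ := hH.nonempty_fixed_point_of_prime_not_dvd_card β
    (by rwa [← even_iff_two_dvd, Nat.not_even_iff_odd])
  refine exists_injective_alternatingGroup_of_apply_eq (a := ι x) (b := b) ?_
    ((viaEmbeddingHom ι).comp H.subtype)
    ((viaEmbeddingHom_injective ι).comp H.subtype_injective) (fun σ => ?_) (fun σ => ?_)
  · rintro rfl
    exact hb ⟨x, rfl⟩
  · rw [MonoidHom.comp_apply, viaEmbeddingHom_apply, viaEmbedding_apply, H.coe_subtype]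
    exact congrArg ι (hx σ)
  · exact viaEmbedding_apply_of_notMem _ ι b hb

theorem IsPGroup.exists_injective_sylow {p : ℕ} [Fact p.Prime] {G H : Type*} [Group G] [Finite G]
    [Group H] (hH : IsPGroup p H) (f : H →* G) (hf : Function.Injective f) (P : Sylow p G) :
    ∃ g : H →* P, Function.Injective g := by
  obtain ⟨P', hP'⟩ := (hH.of_surjective f.rangeRestrict f.rangeRestrict_surjective).exists_le_sylow
  exact ⟨(P'.equiv P).toMonoidHom.comp (f.codRestrict P' fun h => hP' ⟨h, rfl⟩),
    (P'.equiv P).injective.comp fun x y hxy => hf (congrArg Subtype.val hxy)⟩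

theorem Sylow.card_perm {β : Type*} [Finite β] {p : ℕ} [Fact p.Prime] (Q : Sylow p (Perm β)) :
    Nat.card Q = p ^ (Nat.card β)!.factorization p := by
  rw [Q.card_eq_multiplicity, Nat.card_perm]

theorem Sylow.card_alternatingGroup {α : Type*} [Fintype α] [DecidableEq α] [Nontrivial α]
    (P : Sylow 2 (alternatingGroup α)) :
    Nat.card P = 2 ^ ((Nat.card α)!.factorization 2 - 1) := by
  rw [P.card_eq_multiplicity, ← Nat.card_perm, ← two_mul_nat_card_alternatingGroup,
    Nat.factorization_mul two_ne_zero Nat.card_pos.ne']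
  simp [Nat.prime_two.factorization_self]

theorem Nat.factorization_factorial_eq_add {n : ℕ} (hn : n ≠ 0) (p : ℕ) :
    (n !).factorization p = n.factorization p + ((n - 1)!).factorization p := by
  rw [← mul_factorial_pred hn, factorization_mul hn (factorial_ne_zero _), Finsupp.add_apply]

/-- Let `n ≥ 2` be even and `m = v₂(n)` the 2-adic valuation of `n`. Then the
order of a Sylow 2-subgroup of `A_n` equals `2^(m-1)` times the order of a Sylow
2-subgroup of `S_{n-1}`, and a Sylow 2-subgroup of `S_{n-1}` embeds into a Sylow
2-subgroup of `A_n`. -/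
theorem stmt_15 (n : ℕ) (hn : 2 ≤ n) (heven : Even n)
    (P : Sylow 2 (alternatingGroup (Fin n)))
    (Q : Sylow 2 (Equiv.Perm (Fin (n - 1)))) :
    Nat.card P = 2 ^ ((Nat.factorization n) 2 - 1) * Nat.card Q ∧
      ∃ f : ↥Q →* ↥P, Function.Injective f := by
  have : Nontrivial (Fin n) := Fin.nontrivial_iff_two_le.2 hn
  constructor
  · have hv : 1 ≤ n.factorization 2 :=
      Nat.prime_two.factorization_pos_of_dvd (by omega) heven.two_dvd
    rw [P.card_alternatingGroup, Q.card_perm, Nat.card_fin, Nat.card_fin,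
      Nat.factorization_factorial_eq_add (by omega), ← pow_add]
    congr 1
    omega
  · have hodd : Odd (Nat.card (Fin (n - 1))) := by
      rw [Nat.card_fin]
      exact Nat.Even.sub_odd (by omega) heven odd_one
    obtain ⟨f, hf⟩ := Q.isPGroup'.exists_injective_alternatingGroup hodd
      (Fin.castLEEmb (n.sub_le 1)) (b := ⟨n - 1, by omega⟩)
      (fun ⟨y, hy⟩ => absurd (congrArg Fin.val hy) y.is_lt.ne)
    exact Q.isPGroup'.exists_injective_sylow _ hf P
end

section
/- Let n have binary expansion n = 2^(k_0) + 2^(k_1) + ⋯ + 2^(k_m) with 0 ≤ k_0 < k_1 < ⋯ < k_m. Then a Sylow 2-subgroup of the symmetric group S_n is isomorphic to the direct product of Sylow 2-subgroups of the symmetric groups S_{2^(k_0)}, S_{2^(k_1)}, …, S_{2^(k_m)}: i.e. for any Sylow 2-subgroup P of Equiv.Perm (Fin n) and any choice of Sylow 2-subgroups P_i of Equiv.Perm (Fin (2^(k_i))), P is isomorphic to the product group Π i, P_i. -/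
open Finset Equiv

/-- `Equiv.permCongr` as a `MulEquiv`. -/
def permMulEquiv' {α β : Type*} (e : α ≃ β) : Equiv.Perm α ≃* Equiv.Perm β :=
  { e.permCongr with
    map_mul' := by
      intro f g
      ext x
      simp [Equiv.permCongr_apply] }

theorem valadd' (a K : ℕ) (h : a < 2 ^ K) :
    padicValNat 2 (a + 2 ^ K).factorial =
      padicValNat 2 a.factorial + padicValNat 2 (2 ^ K).factorial := by
  haveI : Fact (Nat.Prime 2) := ⟨Nat.prime_two⟩
  have hb : ∀ x : ℕ, x < 2 ^ (K + 1) → Nat.log 2 x < K + 1 := by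
    intro x hx
    rcases Nat.eq_zero_or_pos x with rfl | hx0
    · simp
    · exact Nat.log_lt_of_lt_pow hx0.ne' hx
  have h1 : a + 2 ^ K < 2 ^ (K + 1) := by
    rw [pow_succ]; omega
  rw [padicValNat_factorial (p := 2) (b := K + 1) (hb _ h1),
      padicValNat_factorial (p := 2) (b := K + 1) (hb _ (by omega)),
      padicValNat_factorial (p := 2) (b := K + 1) (hb _ (by omega)),
      ← Finset.sum_add_distrib]
  apply Finset.sum_congr rfl
  intro i hi
  rw [Finset.mem_Ico] at hi
  have hdvd : 2 ^ i ∣ 2 ^ K := pow_dvd_pow 2 (by omega)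
  rw [add_comm a (2 ^ K), Nat.add_div_of_dvd_right hdvd, add_comm]

theorem sum_lt' : ∀ (m : ℕ) (k : Fin (m + 1) → ℕ), StrictMono k →
    (∑ i : Fin (m + 1), 2 ^ k i) < 2 ^ (k (Fin.last m) + 1) := by
  intro m
  induction m with
  | zero =>
    intro k _
    simpa using Nat.pow_lt_pow_succ one_lt_two
  | succ m ih =>
    intro k hk
    rw [Fin.sum_univ_castSucc]
    have h1 := ih (k ∘ Fin.castSucc) (hk.comp Fin.strictMono_castSucc)
    have h2 : k (Fin.castSucc (Fin.last m)) + 1 ≤ k (Fin.last (m + 1)) := by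
      have := hk (Fin.castSucc_lt_last (Fin.last m))
      omega
    have h3 : (2 : ℕ) ^ (k (Fin.castSucc (Fin.last m)) + 1) ≤ 2 ^ k (Fin.last (m + 1)) :=
      Nat.pow_le_pow_right (by norm_num) h2
    simp only [Function.comp] at h1
    rw [pow_succ]
    omega

theorem val_sum' : ∀ (m : ℕ) (k : Fin (m + 1) → ℕ), StrictMono k →
    padicValNat 2 (∑ i : Fin (m + 1), 2 ^ k i).factorial =
      ∑ i : Fin (m + 1), padicValNat 2 ((2 : ℕ) ^ k i).factorial := by
  intro m
  induction m with
  | zero => intro k _; simp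
  | succ m ih =>
    intro k hk
    rw [Fin.sum_univ_castSucc, Fin.sum_univ_castSucc (f := fun i => padicValNat 2 ((2:ℕ) ^ k i).factorial)]
    have hlt : (∑ i : Fin (m + 1), 2 ^ k (Fin.castSucc i)) < 2 ^ k (Fin.last (m + 1)) := by
      have h1 := sum_lt' m (k ∘ Fin.castSucc) (hk.comp Fin.strictMono_castSucc)
      have h2 : k (Fin.castSucc (Fin.last m)) + 1 ≤ k (Fin.last (m + 1)) := by
        have := hk (Fin.castSucc_lt_last (Fin.last m))
        omega
      have h3 : (2 : ℕ) ^ (k (Fin.castSucc (Fin.last m)) + 1) ≤ 2 ^ k (Fin.last (m + 1)) :=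
        Nat.pow_le_pow_right (by norm_num) h2
      simp only [Function.comp] at h1
      omega
    have h4 := ih (k ∘ Fin.castSucc) (hk.comp Fin.strictMono_castSucc)
    simp only [Function.comp] at h4
    rw [valadd' _ _ hlt, h4]

/-- Let `n = 2^(k 0) + 2^(k 1) + ⋯ + 2^(k m)` be the binary expansion of `n`
(`k` strictly increasing). Then a Sylow 2-subgroup of `S_n` is isomorphic to the
direct product of Sylow 2-subgroups of the symmetric groups `S_{2^(k i)}`. -/
theorem stmt_19 (n m : ℕ)
    (k : Fin (m + 1) → ℕ) (hk : StrictMono k)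
    (hsum : n = ∑ i : Fin (m + 1), 2 ^ k i)
    (P : Sylow 2 (Equiv.Perm (Fin n)))
    (Ps : ∀ i : Fin (m + 1), Sylow 2 (Equiv.Perm (Fin (2 ^ k i)))) :
    Nonempty (↥P ≃* (∀ i : Fin (m + 1), ↥(Ps i))) := by
  haveI : Fact (Nat.Prime 2) := ⟨Nat.prime_two⟩
  -- the equivalence of index types
  have hcard : Fintype.card (Σ i : Fin (m + 1), Fin (2 ^ k i)) = n := by
    simp [hsum]
  let e : (Σ i : Fin (m + 1), Fin (2 ^ k i)) ≃ Fin n := Fintype.equivFinOfCardEq hcard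
  let ψ : Equiv.Perm (Σ i : Fin (m + 1), Fin (2 ^ k i)) ≃* Equiv.Perm (Fin n) :=
    permMulEquiv' e
  let ι : (∀ i : Fin (m + 1), ↥(Ps i)) →* (∀ i : Fin (m + 1), Equiv.Perm (Fin (2 ^ k i))) :=
    Pi.monoidHom fun i => ((Ps i : Subgroup _).subtype).comp (Pi.evalMonoidHom _ i)
  let φ : (∀ i : Fin (m + 1), ↥(Ps i)) →* Equiv.Perm (Fin n) :=
    ψ.toMonoidHom.comp ((Equiv.Perm.sigmaCongrRightHom fun i => Fin (2 ^ k i)).comp ι)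
  have hι : Function.Injective ι := by
    intro x y h
    funext i
    exact Subtype.ext (congrFun h i)
  have hφ : Function.Injective φ :=
    ψ.injective.comp (Equiv.Perm.sigmaCongrRightHom_injective.comp hι)
  -- cardinality computation
  have hval : ∀ a : ℕ, (Nat.card (Equiv.Perm (Fin a))).factorization 2 =
      padicValNat 2 a.factorial := by
    intro a
    rw [Nat.card_eq_fintype_card, Fintype.card_perm, Fintype.card_fin,
      Nat.factorization_def _ Nat.prime_two]
  have hcard2 : Nat.card ↥φ.range = 2 ^ ((Nat.card (Equiv.Perm (Fin n))).factorization 2) := by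
    rw [Nat.card_congr (MonoidHom.ofInjective hφ).toEquiv.symm, Nat.card_pi]
    have : ∀ i : Fin (m + 1), Nat.card ↥(Ps i) = 2 ^ padicValNat 2 ((2:ℕ) ^ k i).factorial := by
      intro i
      exact (Sylow.card_eq_multiplicity (Ps i)).trans (by rw [hval])
    simp only [this]
    rw [Finset.prod_pow_eq_pow_sum, hval, hsum, val_sum' m k hk]
  let Q : Sylow 2 (Equiv.Perm (Fin n)) := Sylow.ofCard φ.range hcard2
  exact ⟨(Sylow.equiv P Q).trans (MonoidHom.ofInjective hφ).symm⟩
end
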